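/- For every positive real L and ρ₁,ρ₂ ∈ [0,1), the Hellinger contrast d_H(ρ₁,ρ₂|L) = 1 − [4√((1-ρ₁²)(1-ρ₂²))/(4−(ρ₁+ρ₂)²)]^L lies in [0,1), is symmetric in (ρ₁,ρ₂), and vanishes if and only if ρ₁ = ρ₂. -/

import Mathlib

noncomputable def dH (L r1 r2 : ℝ) : ℝ :=
  1 - (4 * Real.sqrt ((1 - r1 ^ 2) * (1 - r2 ^ 2)) / (4 - (r1 + r2) ^ 2)) ^ L

/-!
Write `d_H = 1 - B ^ L` with `B = 4 √((1 - ρ₁²)(1 - ρ₂²)) / (4 - (ρ₁ + ρ₂)²)`. Squaring,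
`B ≤ 1` amounts to `16 (1 - ρ₁²)(1 - ρ₂²) ≤ (4 - (ρ₁ + ρ₂)²)²`, and the gap in this inequality
factors as `(ρ₁ - ρ₂)² (8 + 2 (ρ₁ + ρ₂)² - (ρ₁ - ρ₂)²)` with a positive second factor whenever
`ρ₁², ρ₂² < 1`. Hence `0 < B ≤ 1` with equality exactly on the diagonal, and `x ↦ 1 - x ^ L`
maps `(0, 1]` into `[0, 1)` with `1` as its only zero.
-/

open Real

noncomputable def bhattacharyyaCoeff (r1 r2 : ℝ) : ℝ :=
  4 * √((1 - r1 ^ 2) * (1 - r2 ^ 2)) / (4 - (r1 + r2) ^ 2)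

lemma dH_eq_one_sub_bhattacharyyaCoeff_rpow (L r1 r2 : ℝ) :
    dH L r1 r2 = 1 - bhattacharyyaCoeff r1 r2 ^ L :=
  rfl

lemma bhattacharyyaCoeff_comm (r1 r2 : ℝ) :
    bhattacharyyaCoeff r1 r2 = bhattacharyyaCoeff r2 r1 := by
  rw [bhattacharyyaCoeff, bhattacharyyaCoeff, mul_comm (1 - r1 ^ 2), add_comm r1]

lemma dH_comm (L r1 r2 : ℝ) : dH L r1 r2 = dH L r2 r1 := by
  simp only [dH_eq_one_sub_bhattacharyyaCoeff_rpow, bhattacharyyaCoeff_comm r1 r2]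

lemma sq_sub_mul_one_sub_sq (r1 r2 : ℝ) :
    ((4 - (r1 + r2) ^ 2) / 4) ^ 2 - (1 - r1 ^ 2) * (1 - r2 ^ 2)
      = (r1 - r2) ^ 2 * (8 + 2 * (r1 + r2) ^ 2 - (r1 - r2) ^ 2) / 16 := by
  ring

section OpenUnitInterval

variable {r1 r2 : ℝ} (h1 : r1 ^ 2 < 1) (h2 : r2 ^ 2 < 1)
include h1 h2

lemma sq_sub_mul_one_sub_sq_factor_pos : 0 < 8 + 2 * (r1 + r2) ^ 2 - (r1 - r2) ^ 2 := by
  nlinarith [sq_nonneg (r1 + r2)]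

lemma mul_one_sub_sq_le_sq :
    (1 - r1 ^ 2) * (1 - r2 ^ 2) ≤ ((4 - (r1 + r2) ^ 2) / 4) ^ 2 := by
  have hgap := sq_sub_mul_one_sub_sq r1 r2
  have hfactor := sq_sub_mul_one_sub_sq_factor_pos h1 h2
  have : 0 ≤ (r1 - r2) ^ 2 * (8 + 2 * (r1 + r2) ^ 2 - (r1 - r2) ^ 2) / 16 := by positivity
  linarith

lemma mul_one_sub_sq_eq_sq_iff :
    (1 - r1 ^ 2) * (1 - r2 ^ 2) = ((4 - (r1 + r2) ^ 2) / 4) ^ 2 ↔ r1 = r2 := by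
  rw [eq_comm, ← sub_eq_zero, sq_sub_mul_one_sub_sq, div_eq_zero_iff, mul_eq_zero,
    sq_eq_zero_iff, sub_eq_zero]
  simp [(sq_sub_mul_one_sub_sq_factor_pos h1 h2).ne']

lemma four_sub_add_sq_pos : 0 < 4 - (r1 + r2) ^ 2 := by
  nlinarith [sq_nonneg (r1 - r2)]

lemma bhattacharyyaCoeff_pos : 0 < bhattacharyyaCoeff r1 r2 := by
  have hx : 0 < (1 - r1 ^ 2) * (1 - r2 ^ 2) := mul_pos (by linarith) (by linarith)
  have := four_sub_add_sq_pos h1 h2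
  unfold bhattacharyyaCoeff
  positivity

lemma bhattacharyyaCoeff_le_one : bhattacharyyaCoeff r1 r2 ≤ 1 := by
  have hD := four_sub_add_sq_pos h1 h2
  rw [bhattacharyyaCoeff, div_le_one hD, ← le_div_iff₀' four_pos,
    sqrt_le_left (by positivity)]
  exact mul_one_sub_sq_le_sq h1 h2

lemma bhattacharyyaCoeff_eq_one_iff : bhattacharyyaCoeff r1 r2 = 1 ↔ r1 = r2 := by
  have hD := four_sub_add_sq_pos h1 h2
  rw [bhattacharyyaCoeff, div_eq_one_iff_eq hD.ne', mul_comm 4, ← eq_div_iff four_ne_zero,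
    sqrt_eq_iff_eq_sq (mul_nonneg (by linarith) (by linarith)) (by positivity)]
  exact mul_one_sub_sq_eq_sq_iff h1 h2

end OpenUnitInterval

section Rpow

variable {a L : ℝ}

lemma one_sub_rpow_mem_Ico (ha : 0 < a) (ha1 : a ≤ 1) (hL : 0 ≤ L) :
    1 - a ^ L ∈ Set.Ico (0 : ℝ) 1 :=
  ⟨sub_nonneg.2 (rpow_le_one ha.le ha1 hL), sub_lt_self 1 (rpow_pos_of_pos ha L)⟩

lemma one_sub_rpow_eq_zero_iff (ha : 0 ≤ a) (hL : L ≠ 0) : 1 - a ^ L = 0 ↔ a = 1 := by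
  rw [sub_eq_zero, eq_comm, ← rpow_left_inj ha zero_le_one hL, one_rpow]

end Rpow

theorem stmt_3 (L r1 r2 : ℝ) (hL : 0 < L)
    (h1 : r1 ∈ Set.Ico (0 : ℝ) 1) (h2 : r2 ∈ Set.Ico (0 : ℝ) 1) :
    dH L r1 r2 ∈ Set.Ico (0 : ℝ) 1 ∧ dH L r1 r2 = dH L r2 r1 ∧
      (dH L r1 r2 = 0 ↔ r1 = r2) := by
  have hsq1 : r1 ^ 2 < 1 := pow_lt_one₀ h1.1 h1.2 two_ne_zero
  have hsq2 : r2 ^ 2 < 1 := pow_lt_one₀ h2.1 h2.2 two_ne_zero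
  have hB := bhattacharyyaCoeff_pos hsq1 hsq2
  rw [dH_eq_one_sub_bhattacharyyaCoeff_rpow, one_sub_rpow_eq_zero_iff hB.le hL.ne',
    bhattacharyyaCoeff_eq_one_iff hsq1 hsq2]
  exact ⟨one_sub_rpow_mem_Ico hB (bhattacharyyaCoeff_le_one hsq1 hsq2) hL.le,
    dH_comm L r1 r2, Iff.rfl⟩
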